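/- Let α be a Radon measure on (0,∞) such that ∫₀^∞ e^{-sx} α(ds) < ∞ for every x > 0, and define the measure Π(dx) = (∫₀^∞ e^{-sx} α(ds)) dx on (0,∞). Then ∫₀^∞ min(1,x²) Π(dx) < ∞ (i.e., Π is a Lévy measure) if and only if ∫₀^∞ (s(s²+1))^{-1} α(ds) < ∞. -/

import Mathlib

open MeasureTheory Real Set Filter
open scoped ENNReal

private lemma exp_lint (a : ℝ) (ha : 0 < a) :
    ∫⁻ x in Ioi (0:ℝ), ENNReal.ofReal (Real.exp (-(a*x))) = ENNReal.ofReal a⁻¹ := by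
  have hint : IntegrableOn (fun x : ℝ => Real.exp (-(a*x))) (Ioi 0) := by
    simpa [neg_mul] using exp_neg_integrableOn_Ioi 0 ha
  rw [← ofReal_integral_eq_lintegral_ofReal hint (ae_of_all _ fun x => (Real.exp_pos _).le)]
  congr 1
  have h := integral_comp_mul_left_Ioi (fun y => Real.exp (-y)) 0 ha
  simp only [mul_zero, integral_exp_neg_Ioi, neg_zero, Real.exp_zero, smul_eq_mul, mul_one] at h
  simpa using h

private lemma sq_exp_le {a x : ℝ} (ha : 0 < a) (hx : 0 ≤ x) :
    x^2 * Real.exp (-(a*x)) ≤ 4 / a^2 := by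
  have hax : 0 ≤ a * x := by positivity
  have h2 : (1 + a*x/2)^2 ≤ Real.exp (a*x) := by
    have h0 := Real.add_one_le_exp (a*x/2)
    calc (1 + a*x/2)^2 ≤ (Real.exp (a*x/2))^2 := by
          apply pow_le_pow_left₀ (by positivity); linarith
      _ = Real.exp (a*x) := by rw [sq, ← Real.exp_add]; ring_nf
  have h1 : (a*x)^2 ≤ 4 * Real.exp (a*x) := by nlinarith
  rw [Real.exp_neg, ← div_eq_mul_inv, div_le_div_iff₀ (Real.exp_pos _) (by positivity)]
  nlinarith [Real.exp_pos (a*x)]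

private lemma lower_aux {s a b c : ℝ} (ha : 0 ≤ a) (hab : a < b) (hc : 0 ≤ c)
    (hbound : ∀ x ∈ Ioo a b, c ≤ min 1 (x^2) * Real.exp (-(s*x))) :
    ENNReal.ofReal (c * (b - a)) ≤
      ∫⁻ x in Ioi (0:ℝ),
        ENNReal.ofReal (min 1 (x^2)) * ENNReal.ofReal (Real.exp (-(s*x))) := by
  have hsub : Ioo a b ⊆ Ioi (0:ℝ) := fun x hx => lt_of_le_of_lt ha hx.1
  calc ENNReal.ofReal (c * (b - a))
      = ENNReal.ofReal c * volume (Ioo a b) := by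
        rw [Real.volume_Ioo, ENNReal.ofReal_mul hc]
    _ = ∫⁻ _ in Ioo a b, ENNReal.ofReal c := (setLIntegral_const _ _).symm
    _ ≤ ∫⁻ x in Ioo a b,
          ENNReal.ofReal (min 1 (x^2)) * ENNReal.ofReal (Real.exp (-(s*x))) := by
        refine setLIntegral_mono (by fun_prop) fun x hx => ?_
        rw [← ENNReal.ofReal_mul (le_min zero_le_one (sq_nonneg x))]
        exact ENNReal.ofReal_le_ofReal (hbound x hx)
    _ ≤ _ := lintegral_mono_set hsub

private lemma upper {s : ℝ} (hs : 0 < s) :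
    (∫⁻ x in Ioi (0:ℝ),
        ENNReal.ofReal (min 1 (x^2)) * ENNReal.ofReal (Real.exp (-(s*x))))
      ≤ ENNReal.ofReal 64 * ENNReal.ofReal (1/(s*(s^2+1))) := by
  have hpos : (0:ℝ) < s*(s^2+1) := by positivity
  rcases le_total s 1 with h1 | h1
  · calc (∫⁻ x in Ioi (0:ℝ),
          ENNReal.ofReal (min 1 (x^2)) * ENNReal.ofReal (Real.exp (-(s*x))))
        ≤ ∫⁻ x in Ioi (0:ℝ), ENNReal.ofReal (Real.exp (-(s*x))) := by
          refine lintegral_mono fun x => ?_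
          exact mul_le_of_le_one_left zero_le
            (ENNReal.ofReal_le_one.2 (min_le_left _ _))
      _ = ENNReal.ofReal s⁻¹ := exp_lint s hs
      _ ≤ ENNReal.ofReal 64 * ENNReal.ofReal (1/(s*(s^2+1))) := by
          rw [← ENNReal.ofReal_mul (by norm_num), mul_one_div]
          apply ENNReal.ofReal_le_ofReal
          rw [inv_eq_one_div, div_le_div_iff₀ hs hpos]
          nlinarith
  · have hs2 : (0:ℝ) < s/2 := by positivity
    calc (∫⁻ x in Ioi (0:ℝ),
          ENNReal.ofReal (min 1 (x^2)) * ENNReal.ofReal (Real.exp (-(s*x))))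
        ≤ ∫⁻ x in Ioi (0:ℝ),
            ENNReal.ofReal (16/s^2) * ENNReal.ofReal (Real.exp (-(s/2*x))) := by
          refine setLIntegral_mono (by fun_prop) fun x hx => ?_
          rw [← ENNReal.ofReal_mul (le_min zero_le_one (sq_nonneg x)),
            ← ENNReal.ofReal_mul (by positivity)]
          apply ENNReal.ofReal_le_ofReal
          have hx0 : (0:ℝ) ≤ x := (le_of_lt hx)
          have key : x^2 * Real.exp (-(s/2*x)) ≤ 16/s^2 := by
            have := sq_exp_le hs2 hx0
            calc x^2 * Real.exp (-(s/2*x)) ≤ 4/(s/2)^2 := this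
              _ = 16/s^2 := by field_simp; ring
          have hsplit : Real.exp (-(s*x)) =
              Real.exp (-(s/2*x)) * Real.exp (-(s/2*x)) := by
            rw [← Real.exp_add]; ring_nf
          have hmin : min 1 (x^2) ≤ x^2 := min_le_right _ _
          have he : (0:ℝ) < Real.exp (-(s/2*x)) := Real.exp_pos _
          calc min 1 (x^2) * Real.exp (-(s*x))
              ≤ x^2 * Real.exp (-(s*x)) := by
                apply mul_le_mul_of_nonneg_right hmin (Real.exp_pos _).le
            _ = (x^2 * Real.exp (-(s/2*x))) * Real.exp (-(s/2*x)) := by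
                rw [hsplit]; ring
            _ ≤ (16/s^2) * Real.exp (-(s/2*x)) := by
                apply mul_le_mul_of_nonneg_right key he.le
      _ = ENNReal.ofReal (16/s^2) * ENNReal.ofReal ((s/2)⁻¹) := by
          rw [lintegral_const_mul' _ _ ENNReal.ofReal_ne_top, exp_lint (s/2) hs2]
      _ ≤ ENNReal.ofReal 64 * ENNReal.ofReal (1/(s*(s^2+1))) := by
          rw [← ENNReal.ofReal_mul (by positivity), ← ENNReal.ofReal_mul (by norm_num)]
          apply ENNReal.ofReal_le_ofReal
          rw [inv_div, div_mul_div_comm, mul_one_div, div_le_div_iff₀ (by positivity) hpos]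
          nlinarith [sq_nonneg s, pow_pos hs 3]

private lemma lower {s : ℝ} (hs : 0 < s) :
    ENNReal.ofReal ((16 * Real.exp 1)⁻¹) * ENNReal.ofReal (1/(s*(s^2+1)))
      ≤ ∫⁻ x in Ioi (0:ℝ),
          ENNReal.ofReal (min 1 (x^2)) * ENNReal.ofReal (Real.exp (-(s*x))) := by
  have hE : (0:ℝ) < Real.exp 1 := Real.exp_pos 1
  have hpos : (0:ℝ) < s*(s^2+1) := by positivity
  rw [← ENNReal.ofReal_mul (by positivity)]
  rcases lt_or_ge s (1/2) with h | h
  · -- use interval (1, s⁻¹), constant (exp 1)⁻¹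
    have hs2 : (2:ℝ) ≤ s⁻¹ := (le_inv_comm₀ two_pos hs).2 (by linarith)
    refine le_trans (ENNReal.ofReal_le_ofReal ?_)
      (lower_aux (a := 1) (b := s⁻¹) (c := (Real.exp 1)⁻¹)
        zero_le_one (by linarith) (by positivity) fun x hx => ?_)
    · have hA : 1/(s*(s^2+1)) ≤ 1/s := one_div_le_one_div_of_le hs (by nlinarith)
      have hB : s⁻¹/2 ≤ s⁻¹ - 1 := by linarith
      calc (16 * Real.exp 1)⁻¹ * (1/(s*(s^2+1)))
          ≤ (16 * Real.exp 1)⁻¹ * (1/s) := by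
            apply mul_le_mul_of_nonneg_left hA (by positivity)
        _ ≤ (Real.exp 1)⁻¹ * (s⁻¹/2) := by
            rw [one_div, mul_inv]
            have hP : (0:ℝ) ≤ (Real.exp 1)⁻¹ * s⁻¹ := by positivity
            nlinarith [hP]
        _ ≤ (Real.exp 1)⁻¹ * (s⁻¹ - 1) := by
            apply mul_le_mul_of_nonneg_left hB (by positivity)
    · obtain ⟨hx1, hx2⟩ := hx
      have hmin : min 1 (x^2) = 1 := min_eq_left (by nlinarith)
      have hsx : s * x ≤ 1 := by
        calc s * x ≤ s * s⁻¹ := by nlinarith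
          _ = 1 := mul_inv_cancel₀ hs.ne'
      rw [hmin, one_mul, ← Real.exp_neg]
      exact Real.exp_le_exp.2 (by linarith)
  · rcases le_total s 1 with h1 | h1
    · -- interval (1/2, 1), constant (1/4)*(exp 1)⁻¹
      refine le_trans (ENNReal.ofReal_le_ofReal ?_)
        (lower_aux (a := 1/2) (b := 1) (c := 1/4 * (Real.exp 1)⁻¹)
          (by norm_num) (by norm_num) (by positivity) fun x hx => ?_)
      · have hA : 1/(s*(s^2+1)) ≤ 2 := by
          rw [div_le_iff₀ hpos]; nlinarith
        calc (16 * Real.exp 1)⁻¹ * (1/(s*(s^2+1)))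
            ≤ (16 * Real.exp 1)⁻¹ * 2 := by
              apply mul_le_mul_of_nonneg_left hA (by positivity)
          _ ≤ 1/4 * (Real.exp 1)⁻¹ * (1 - 1/2) := by
              rw [mul_inv]
              have hP : (0:ℝ) ≤ (Real.exp 1)⁻¹ := by positivity
              nlinarith [hP]
      · obtain ⟨hx1, hx2⟩ := hx
        have hmin : min 1 (x^2) = x^2 := min_eq_right (by nlinarith)
        rw [hmin]
        have hq : (1:ℝ)/4 ≤ x^2 := by nlinarith
        have hsx : s * x ≤ 1 := by nlinarith
        have he : (Real.exp 1)⁻¹ ≤ Real.exp (-(s*x)) := by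
          rw [← Real.exp_neg]; exact Real.exp_le_exp.2 (by linarith)
        exact mul_le_mul hq he (by positivity) (by positivity)
    · -- s ≥ 1 : interval (s⁻¹/2, s⁻¹), constant (1/(4s²))*(exp 1)⁻¹
      have hsi : (0:ℝ) < s⁻¹ := by positivity
      have hcancel : s * s⁻¹ = 1 := mul_inv_cancel₀ hs.ne'
      refine le_trans (ENNReal.ofReal_le_ofReal ?_)
        (lower_aux (a := s⁻¹/2) (b := s⁻¹) (c := 1/(4*s^2) * (Real.exp 1)⁻¹)
          (by positivity) (by linarith) (by positivity) fun x hx => ?_)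
      · have hA : 1/(s*(s^2+1)) ≤ 2/s^3 := by
          rw [div_le_div_iff₀ hpos (by positivity)]; nlinarith
        calc (16 * Real.exp 1)⁻¹ * (1/(s*(s^2+1)))
            ≤ (16 * Real.exp 1)⁻¹ * (2/s^3) := by
              apply mul_le_mul_of_nonneg_left hA (by positivity)
          _ = 1/(4*s^2) * (Real.exp 1)⁻¹ * (s⁻¹ - s⁻¹/2) := by
              field_simp; ring
      · obtain ⟨hx1, hx2⟩ := hx
        have hx0 : (0:ℝ) < x := lt_trans (by positivity) hx1
        have hsi1 : s⁻¹ ≤ 1 := by nlinarith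
        have hxle1 : x ≤ 1 := by linarith
        have hmin : min 1 (x^2) = x^2 := min_eq_right (by nlinarith)
        rw [hmin]
        have hq : 1/(4*s^2) ≤ x^2 := by
          have h2 : s⁻¹/2 ≤ x := le_of_lt hx1
          have h3 : s⁻¹^2/4 ≤ x^2 := by nlinarith
          have h4 : s⁻¹^2 = 1/s^2 := by field_simp
          calc 1/(4*s^2) = s⁻¹^2/4 := by rw [h4]; ring
            _ ≤ x^2 := h3
        have hsx : s * x ≤ 1 := by
          calc s * x ≤ s * s⁻¹ := by nlinarith
            _ = 1 := hcancel
        have he : (Real.exp 1)⁻¹ ≤ Real.exp (-(s*x)) := by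
          rw [← Real.exp_neg]; exact Real.exp_le_exp.2 (by linarith)
        exact mul_le_mul hq he (by positivity) (by positivity)

/-- let `α` be a (Radon) measure on `(0,∞)` such that
`∫₀^∞ e^{-sx} α(ds) < ∞` for every `x > 0`, and let
`Π(dx) = (∫₀^∞ e^{-sx} α(ds)) dx` on `(0,∞)`. Then `Π` is a Lévy measure,
i.e. `∫₀^∞ min(1,x²) Π(dx) < ∞`, if and only if
`∫₀^∞ (s(s²+1))⁻¹ α(ds) < ∞`. -/
theorem statement19 (α : Measure ℝ)
    (hfin : ∀ x > (0 : ℝ),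
      ∫⁻ s in Set.Ioi (0 : ℝ), ENNReal.ofReal (Real.exp (-(s * x))) ∂α < ⊤) :
    (∫⁻ x in Set.Ioi (0 : ℝ),
        ENNReal.ofReal (min 1 (x ^ 2)) *
          ∫⁻ s in Set.Ioi (0 : ℝ), ENNReal.ofReal (Real.exp (-(s * x))) ∂α) < ⊤ ↔
      ∫⁻ s in Set.Ioi (0 : ℝ), ENNReal.ofReal (1 / (s * (s ^ 2 + 1))) ∂α < ⊤ := by
  -- σ-finiteness of the restricted measure
  haveI hsf : SigmaFinite (α.restrict (Ioi (0:ℝ))) := by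
    refine ⟨⟨⟨fun n => Iic (n:ℝ), fun _ => trivial, fun n => ?_, ?_⟩⟩⟩
    · rw [Measure.restrict_apply measurableSet_Iic]
      have key : ENNReal.ofReal (Real.exp (-(n:ℝ))) * α (Iic (n:ℝ) ∩ Ioi 0) ≤
          ∫⁻ s in Ioi (0:ℝ), ENNReal.ofReal (Real.exp (-(s * 1))) ∂α := by
        calc ENNReal.ofReal (Real.exp (-(n:ℝ))) * α (Iic (n:ℝ) ∩ Ioi 0)
            = ∫⁻ _ in Iic (n:ℝ) ∩ Ioi 0, ENNReal.ofReal (Real.exp (-(n:ℝ))) ∂α :=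
              (setLIntegral_const _ _).symm
          _ ≤ ∫⁻ s in Iic (n:ℝ) ∩ Ioi 0, ENNReal.ofReal (Real.exp (-(s*1))) ∂α := by
              refine setLIntegral_mono (by fun_prop) fun s hs => ?_
              refine ENNReal.ofReal_le_ofReal (Real.exp_le_exp.2 ?_)
              have : s ≤ (n:ℝ) := hs.1
              linarith
          _ ≤ _ := lintegral_mono_set inter_subset_right
      have hlt := hfin 1 one_pos
      by_contra hcon
      rw [not_lt, top_le_iff] at hcon
      rw [hcon, ENNReal.mul_top (by simp [Real.exp_pos])] at key
      exact hlt.ne (top_le_iff.1 key)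
    · refine eq_univ_of_forall fun x => mem_iUnion.2 ?_
      obtain ⟨n, hn⟩ := exists_nat_ge x
      exact ⟨n, hn⟩
  -- Tonelli
  have hswap :
      (∫⁻ x in Set.Ioi (0 : ℝ),
          ENNReal.ofReal (min 1 (x ^ 2)) *
            ∫⁻ s in Set.Ioi (0 : ℝ), ENNReal.ofReal (Real.exp (-(s * x))) ∂α)
        = ∫⁻ s in Ioi (0:ℝ), (∫⁻ x in Ioi (0:ℝ),
            ENNReal.ofReal (min 1 (x ^ 2)) * ENNReal.ofReal (Real.exp (-(s * x)))) ∂α := by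
    have h1 : ∀ x : ℝ, ENNReal.ofReal (min 1 (x ^ 2)) *
          ∫⁻ s in Ioi (0:ℝ), ENNReal.ofReal (Real.exp (-(s * x))) ∂α
        = ∫⁻ s in Ioi (0:ℝ),
            ENNReal.ofReal (min 1 (x ^ 2)) * ENNReal.ofReal (Real.exp (-(s * x))) ∂α :=
      fun x => (lintegral_const_mul' _ _ ENNReal.ofReal_ne_top).symm
    simp_rw [h1]
    exact lintegral_lintegral_swap
      ((by fun_prop : Measurable fun p : ℝ × ℝ =>
        ENNReal.ofReal (min 1 (p.1 ^ 2)) * ENNReal.ofReal (Real.exp (-(p.2 * p.1)))).aemeasurable)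
  rw [hswap]
  have hup : (∫⁻ s in Ioi (0:ℝ), (∫⁻ x in Ioi (0:ℝ),
        ENNReal.ofReal (min 1 (x ^ 2)) * ENNReal.ofReal (Real.exp (-(s * x)))) ∂α)
      ≤ ENNReal.ofReal 64 * ∫⁻ s in Ioi (0:ℝ), ENNReal.ofReal (1 / (s * (s ^ 2 + 1))) ∂α := by
    rw [← lintegral_const_mul' _ _ ENNReal.ofReal_ne_top]
    exact setLIntegral_mono' measurableSet_Ioi fun s hs => upper hs
  have hlow : (ENNReal.ofReal ((16 * Real.exp 1)⁻¹) *
        ∫⁻ s in Ioi (0:ℝ), ENNReal.ofReal (1 / (s * (s ^ 2 + 1))) ∂α)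
      ≤ ∫⁻ s in Ioi (0:ℝ), (∫⁻ x in Ioi (0:ℝ),
        ENNReal.ofReal (min 1 (x ^ 2)) * ENNReal.ofReal (Real.exp (-(s * x)))) ∂α := by
    rw [← lintegral_const_mul' _ _ ENNReal.ofReal_ne_top]
    exact setLIntegral_mono' measurableSet_Ioi fun s hs => lower hs
  constructor
  · intro hI
    have h1 := lt_of_le_of_lt hlow hI
    by_contra hJt
    rw [not_lt, top_le_iff] at hJt
    rw [hJt, ENNReal.mul_top (by simp [Real.exp_pos])] at h1
    exact (lt_irrefl _ h1)
  · intro hJ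
    exact lt_of_le_of_lt hup (ENNReal.mul_lt_top ENNReal.ofReal_lt_top hJ)
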